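/- Let 0 < α < 1, b > 0, J = [0,b]. Let ψ : J → ℝ be increasing and continuously differentiable with ψ'(z) > 0 for all z ∈ J. Let F : J × ℝ × ℝ → ℝ and H : J × J × ℝ → ℝ be continuous. Suppose ρ : J → ℝ is a continuous increasing function and γ > 0 are such that (Q3) (1/Γ(α)) ∫₀^z ψ'(κ)(ψ(z) − ψ(κ))^{α−1} ρ(κ) dκ ≤ γ ρ(z) for all z ∈ J. Let ε > 0 and let ω : J → ℝ be continuously differentiable such that for some continuous h : J → ℝ with |h(z)| ≤ ε ρ(z) for all z ∈ J one has N^{α,ψ}ω(z) = F(z, ω(z), (1/Γ(α)) ∫₀^z ψ'(τ)(ψ(z) − ψ(τ))^{α−1} H(z, τ, N^{α,ψ}ω(τ)) dτ) + h(z) for all z ∈ J. Then for all z ∈ J, |ω(z) − ω(0) − (1/Γ(α)) ∫₀^z ψ'(κ)(ψ(z) − ψ(κ))^{α−1} F(κ, ω(κ), (1/Γ(α)) ∫₀^κ ψ'(τ)(ψ(κ) − ψ(τ))^{α−1} H(κ, τ, N^{α,ψ}ω(τ)) dτ) dκ| ≤ ε γ ρ(z). -/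

import Mathlib

/-
The ψ-Riemann–Liouville integrals form a semigroup, `I^a (I^c f) = I^(a+c) f`: after Fubini on
the triangle `0 < τ < κ < z`, the substitution `x = (ψ κ - ψ τ) / (ψ z - ψ τ)` turns the inner
integral into the Beta integral `B(c, a)`. Since `N^{α,ψ} ω = I^(1-α) (ω' / ψ')` and
`I^1 g (z) = ∫₀^z ψ' g`, this gives `I^α (N^{α,ψ} ω) (z) = ω(z) - ω(0)`. Subtracting the equation
satisfied by `ω` leaves `ω(z) - ω(0) - I^α F(…)(z) = I^α h (z)`, and since the kernel is
nonnegative, `|I^α h| ≤ ε I^α ρ ≤ ε γ ρ` by (Q3).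
-/

open MeasureTheory Set

/-- ψ-Riemann–Liouville fractional integral of order `α` of `f` with respect to `ψ`
(with `ψ'` a given derivative function of `ψ`):
`I^{α,ψ} f (z) = (1/Γ(α)) ∫₀^z ψ'(κ) (ψ(z) - ψ(κ))^(α-1) f(κ) dκ`. -/
noncomputable def psiInt (α : ℝ) (ψ ψ' f : ℝ → ℝ) (z : ℝ) : ℝ :=
  (1 / Real.Gamma α) * ∫ κ in (0:ℝ)..z, ψ' κ * (ψ z - ψ κ) ^ (α - 1) * f κ

/-- ψ-Caputo fractional derivative of order `α` (for `0 < α < 1`) of a function with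
derivative `v'`, with respect to `ψ` (with derivative `ψ'`):
`N^{α,ψ} v (z) = (1/Γ(1-α)) ∫₀^z ψ'(κ) (ψ(z) - ψ(κ))^(-α) (v'(κ)/ψ'(κ)) dκ`. -/
noncomputable def psiCaputo (α : ℝ) (ψ ψ' v' : ℝ → ℝ) (z : ℝ) : ℝ :=
  (1 / Real.Gamma (1 - α)) * ∫ κ in (0:ℝ)..z, ψ' κ * (ψ z - ψ κ) ^ (-α) * (v' κ / ψ' κ)

/-- Mittag-Leffler function `E_α(x) = ∑_{m=0}^∞ x^m / Γ(α m + 1)`. -/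
noncomputable def mittagLeffler (α x : ℝ) : ℝ :=
  ∑' m : ℕ, x ^ m / Real.Gamma (α * m + 1)

open ProbabilityTheory Function

section ChangeOfVariables

variable {φ φ' : ℝ → ℝ} {s t : ℝ}

theorem StrictMonoOn.image_Ioo_of_continuousOn (hst : s ≤ t) (hφ : StrictMonoOn φ (Icc s t))
    (hφc : ContinuousOn φ (Icc s t)) : φ '' Ioo s t = Ioo (φ s) (φ t) := by
  refine (image_subset_iff.2 fun x hx => ?_).antisymm (intermediate_value_Ioo hst hφc)
  have hx' := Ioo_subset_Icc_self hx
  exact ⟨hφ (left_mem_Icc.2 hst) hx' hx.1, hφ hx' (right_mem_Icc.2 hst) hx.2⟩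

theorem HasDerivWithinAt.nonneg_of_monotoneOn_Icc {x d : ℝ} (hst : s < t) (hx : x ∈ Icc s t)
    (hd : HasDerivWithinAt φ d (Icc s t) x) (hφ : MonotoneOn φ (Icc s t)) : 0 ≤ d :=
  hd.nonneg_of_monotoneOn (uniqueDiffWithinAt_iff_accPt.1 (uniqueDiffOn_Icc hst x hx)) hφ

theorem deriv_mul_comp_eqOn_abs_deriv_smul_comp (hst : s < t) (hφ : StrictMonoOn φ (Icc s t))
    (hφ' : ∀ x ∈ Icc s t, HasDerivWithinAt φ (φ' x) (Icc s t) x) (g : ℝ → ℝ) :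
    EqOn (fun x => φ' x * g (φ x)) (fun x => |φ' x| • g (φ x)) (Ioo s t) := fun x hx => by
  have hx' := Ioo_subset_Icc_self hx
  have hd := (hφ' x hx').nonneg_of_monotoneOn_Icc hst hx' hφ.monotoneOn
  simp only [smul_eq_mul, abs_of_nonneg hd]

theorem integrableOn_Ioo_deriv_mul_comp_iff (hst : s < t) (hφ : StrictMonoOn φ (Icc s t))
    (hφ' : ∀ x ∈ Icc s t, HasDerivWithinAt φ (φ' x) (Icc s t) x) (g : ℝ → ℝ) :
    IntegrableOn (fun x => φ' x * g (φ x)) (Ioo s t) ↔ IntegrableOn g (Ioo (φ s) (φ t)) := by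
  rw [← hφ.image_Ioo_of_continuousOn hst.le fun x hx => (hφ' x hx).continuousWithinAt,
    integrableOn_image_iff_integrableOn_abs_deriv_smul measurableSet_Ioo
      (fun x hx => (hφ' x (Ioo_subset_Icc_self hx)).mono Ioo_subset_Icc_self)
      (hφ.injOn.mono Ioo_subset_Icc_self)]
  exact integrableOn_congr_fun (deriv_mul_comp_eqOn_abs_deriv_smul_comp hst hφ hφ' g)
    measurableSet_Ioo

theorem integral_Ioo_deriv_mul_comp (hst : s < t) (hφ : StrictMonoOn φ (Icc s t))
    (hφ' : ∀ x ∈ Icc s t, HasDerivWithinAt φ (φ' x) (Icc s t) x) (g : ℝ → ℝ) :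
    ∫ x in Ioo s t, φ' x * g (φ x) = ∫ u in Ioo (φ s) (φ t), g u := by
  rw [← hφ.image_Ioo_of_continuousOn hst.le fun x hx => (hφ' x hx).continuousWithinAt,
    integral_image_eq_integral_abs_deriv_smul measurableSet_Ioo
      (fun x hx => (hφ' x (Ioo_subset_Icc_self hx)).mono Ioo_subset_Icc_self)
      (hφ.injOn.mono Ioo_subset_Icc_self)]
  exact setIntegral_congr_fun measurableSet_Ioo
    (deriv_mul_comp_eqOn_abs_deriv_smul_comp hst hφ hφ' g)

end ChangeOfVariables

theorem integrableOn_and_integral_rpow_mul_one_sub_rpow {a c : ℝ} (ha : 0 < a)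
    (hc : 0 < c) :
    IntegrableOn (fun x : ℝ => x ^ (a - 1) * (1 - x) ^ (c - 1)) (Ioo 0 1) ∧
      ∫ x in Ioo (0:ℝ) 1, x ^ (a - 1) * (1 - x) ^ (c - 1) = beta a c := by
  have hofReal : ∀ x ∈ Icc (0:ℝ) 1, ((x : ℂ) ^ ((a : ℂ) - 1) * (1 - (x : ℂ)) ^ ((c : ℂ) - 1)) =
      ((x ^ (a - 1) * (1 - x) ^ (c - 1) : ℝ) : ℂ) := by
    intro x hx
    rw [Complex.ofReal_mul, Complex.ofReal_cpow hx.1, Complex.ofReal_cpow (sub_nonneg.2 hx.2)]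
    push_cast; rfl
  have hnonneg : ∀ x ∈ Icc (0:ℝ) 1, 0 ≤ x ^ (a - 1) * (1 - x) ^ (c - 1) := fun x hx =>
    mul_nonneg (Real.rpow_nonneg hx.1 _) (Real.rpow_nonneg (sub_nonneg.2 hx.2) _)
  rw [← intervalIntegrable_iff_integrableOn_Ioo_of_le zero_le_one,
    ← integral_Ioc_eq_integral_Ioo, ← intervalIntegral.integral_of_le zero_le_one]
  constructor
  · refine (intervalIntegrable_congr fun x hx => ?_).mp
      (Complex.betaIntegral_convergent (u := a) (v := c) (by simpa) (by simpa)).norm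
    have hx' : x ∈ Icc (0:ℝ) 1 := Ioc_subset_Icc_self (by simpa using hx)
    simp only [hofReal x hx', Complex.norm_real, Real.norm_of_nonneg (hnonneg x hx')]
  · rw [beta_eq_betaIntegralReal a c ha hc, Complex.betaIntegral,
      intervalIntegral.integral_congr
        (g := fun x : ℝ => ((x ^ (a - 1) * (1 - x) ^ (c - 1) : ℝ) : ℂ))
        (by rw [uIcc_of_le zero_le_one]; exact hofReal), intervalIntegral.integral_ofReal,
      Complex.ofReal_re]

def openTriangle (a z : ℝ) : Set (ℝ × ℝ) := {p | p.2 < p.1} ∩ Ioo a z ×ˢ Ioo a z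

section Triangle

variable {a z : ℝ} {k : ℝ → ℝ → ℝ}

theorem measurableSet_openTriangle (a z : ℝ) : MeasurableSet (openTriangle a z) :=
  (measurableSet_lt measurable_snd measurable_fst).inter (measurableSet_Ioo.prod measurableSet_Ioo)

theorem restrict_prod_restrict_Ioo_eq_openTriangle (a z : ℝ) :
    ((volume.restrict (Ioo a z)).prod (volume.restrict (Ioo a z))).restrict
      {p : ℝ × ℝ | p.2 < p.1} = volume.restrict (openTriangle a z) := by
  rw [Measure.prod_restrict, ← Measure.volume_eq_prod,
    Measure.restrict_restrict (measurableSet_lt measurable_snd measurable_fst)]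
  rfl

theorem integrable_indicator_lt_iff_integrableOn_openTriangle :
    Integrable ({p : ℝ × ℝ | p.2 < p.1}.indicator (uncurry k))
      ((volume.restrict (Ioo a z)).prod (volume.restrict (Ioo a z))) ↔
      IntegrableOn (uncurry k) (openTriangle a z) := by
  rw [integrable_indicator_iff (measurableSet_lt measurable_snd measurable_fst), IntegrableOn,
    restrict_prod_restrict_Ioo_eq_openTriangle, IntegrableOn]

theorem integral_indicator_lt_left {κ : ℝ} (hκ : κ < z) :
    ∫ τ in Ioo a z, {p : ℝ × ℝ | p.2 < p.1}.indicator (uncurry k) (κ, τ) =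
      ∫ τ in Ioo a κ, k κ τ := by
  have : (fun τ => {p : ℝ × ℝ | p.2 < p.1}.indicator (uncurry k) (κ, τ)) =
      (Iio κ).indicator (k κ) := by
    ext τ; simp [indicator_apply]
  rw [this, setIntegral_indicator measurableSet_Iio, Ioo_inter_Iio, min_eq_right hκ.le]

theorem indicator_lt_right (τ : ℝ) :
    (fun κ => {p : ℝ × ℝ | p.2 < p.1}.indicator (uncurry k) (κ, τ)) =
      (Ioi τ).indicator (fun κ => k κ τ) := by
  ext κ; simp [indicator_apply]

theorem integrableOn_and_integral_Ioo_integral_Ioo_swap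
    (hk : IntegrableOn (uncurry k) (openTriangle a z)) :
    IntegrableOn (fun κ => ∫ τ in Ioo a κ, k κ τ) (Ioo a z) ∧
      ∫ κ in Ioo a z, ∫ τ in Ioo a κ, k κ τ = ∫ τ in Ioo a z, ∫ κ in Ioo τ z, k κ τ := by
  set K := {p : ℝ × ℝ | p.2 < p.1}.indicator (uncurry k)
  have hK := integrable_indicator_lt_iff_integrableOn_openTriangle.2 hk
  have hleft : EqOn (fun κ => ∫ τ in Ioo a z, K (κ, τ)) (fun κ => ∫ τ in Ioo a κ, k κ τ)
      (Ioo a z) := fun κ hκ => integral_indicator_lt_left hκ.2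
  have hright : EqOn (fun τ => ∫ κ in Ioo a z, K (κ, τ)) (fun τ => ∫ κ in Ioo τ z, k κ τ)
      (Ioo a z) := fun τ hτ => by
    simp only [K, indicator_lt_right, setIntegral_indicator measurableSet_Ioi, Ioo_inter_Ioi,
      max_eq_right hτ.1.le]
  refine ⟨IntegrableOn.congr_fun hK.integral_prod_left hleft measurableSet_Ioo, ?_⟩
  rw [← setIntegral_congr_fun measurableSet_Ioo hleft,
    ← setIntegral_congr_fun measurableSet_Ioo hright]
  exact integral_integral_swap (f := fun κ τ => K (κ, τ)) hK

theorem integrableOn_openTriangle_of_norm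
    (hk : AEStronglyMeasurable (uncurry k) (volume.restrict (openTriangle a z)))
    (hsec : ∀ τ ∈ Ioo a z, IntegrableOn (fun κ => k κ τ) (Ioo τ z))
    (hnorm : IntegrableOn (fun τ => ∫ κ in Ioo τ z, ‖k κ τ‖) (Ioo a z)) :
    IntegrableOn (uncurry k) (openTriangle a z) := by
  rw [← integrable_indicator_lt_iff_integrableOn_openTriangle]
  have hmeas : AEStronglyMeasurable ({p : ℝ × ℝ | p.2 < p.1}.indicator (uncurry k))
      ((volume.restrict (Ioo a z)).prod (volume.restrict (Ioo a z))) := by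
    rwa [aestronglyMeasurable_indicator_iff (measurableSet_lt measurable_snd measurable_fst),
      restrict_prod_restrict_Ioo_eq_openTriangle]
  refine (integrable_prod_iff' hmeas).2 ⟨?_, ?_⟩
  · filter_upwards [ae_restrict_mem measurableSet_Ioo] with τ hτ
    rw [indicator_lt_right, integrable_indicator_iff measurableSet_Ioi, IntegrableOn,
      Measure.restrict_restrict measurableSet_Ioi, Ioi_inter_Ioo, max_eq_left hτ.1.le]
    exact hsec τ hτ
  · refine IntegrableOn.congr_fun hnorm (fun τ hτ => ?_) measurableSet_Ioo
    have hnorm_sec :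
        (fun κ => ‖{p : ℝ × ℝ | p.2 < p.1}.indicator (uncurry k) (κ, τ)‖) =
        (Ioi τ).indicator (fun κ => ‖k κ τ‖) := by
      ext κ; rw [← norm_indicator_eq_indicator_norm, ← indicator_lt_right]
    rw [hnorm_sec, setIntegral_indicator measurableSet_Ioi, Ioo_inter_Ioi, max_eq_right hτ.1.le]

end Triangle

noncomputable def psiKernel (a : ℝ) (ψ ψ' : ℝ → ℝ) (z κ : ℝ) : ℝ :=
  ψ' κ * (ψ z - ψ κ) ^ (a - 1)

section Basic

variable {ψ ψ' : ℝ → ℝ} {a z : ℝ} {f g : ℝ → ℝ}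

theorem psiInt_eq_setIntegral (a : ℝ) (ψ ψ' f : ℝ → ℝ) (hz : 0 ≤ z) :
    psiInt a ψ ψ' f z = (Real.Gamma a)⁻¹ * ∫ κ in Ioo 0 z, psiKernel a ψ ψ' z κ * f κ := by
  rw [psiInt, one_div, intervalIntegral.integral_of_le hz, integral_Ioc_eq_integral_Ioo]
  rfl

theorem psiInt_congr (hz : 0 ≤ z) (hfg : EqOn f g (Icc 0 z)) :
    psiInt a ψ ψ' f z = psiInt a ψ ψ' g z := by
  simp only [psiInt_eq_setIntegral _ _ _ _ hz]
  congr 1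
  exact setIntegral_congr_fun measurableSet_Ioo fun κ hκ => by
    rw [hfg (Ioo_subset_Icc_self hκ)]

theorem psiInt_sub (hz : 0 ≤ z)
    (hf : IntegrableOn (fun κ => psiKernel a ψ ψ' z κ * f κ) (Ioo 0 z))
    (hg : IntegrableOn (fun κ => psiKernel a ψ ψ' z κ * g κ) (Ioo 0 z)) :
    psiInt a ψ ψ' (fun κ => f κ - g κ) z = psiInt a ψ ψ' f z - psiInt a ψ ψ' g z := by
  simp only [psiInt_eq_setIntegral _ _ _ _ hz, mul_sub, integral_sub hf hg]

theorem psiInt_const_mul (c : ℝ) :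
    psiInt a ψ ψ' (fun κ => c * f κ) z = c * psiInt a ψ ψ' f z := by
  simp only [psiInt, mul_left_comm _ c, intervalIntegral.integral_const_mul]

theorem psiKernel_nonneg {κ : ℝ} (hψ'κ : 0 ≤ ψ' κ) (hψκ : ψ κ ≤ ψ z) :
    0 ≤ psiKernel a ψ ψ' z κ :=
  mul_nonneg hψ'κ (Real.rpow_nonneg (sub_nonneg.2 hψκ) _)

theorem abs_psiInt_le (ha : 0 < a) (hz : 0 ≤ z) (hψ : MonotoneOn ψ (Icc 0 z))
    (hψ' : ∀ x ∈ Icc 0 z, 0 ≤ ψ' x)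
    (hg : IntegrableOn (fun κ => psiKernel a ψ ψ' z κ * g κ) (Ioo 0 z))
    (hfg : ∀ x ∈ Icc 0 z, |f x| ≤ g x) :
    |psiInt a ψ ψ' f z| ≤ psiInt a ψ ψ' g z := by
  have hΓ := inv_pos.2 (Real.Gamma_pos_of_pos ha)
  simp only [psiInt_eq_setIntegral _ _ _ _ hz]
  rw [abs_mul, abs_of_pos hΓ, ← Real.norm_eq_abs]
  refine mul_le_mul_of_nonneg_left (norm_integral_le_of_norm_le hg ?_) hΓ.le
  filter_upwards [ae_restrict_mem measurableSet_Ioo] with κ hκ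
  have hκ' := Ioo_subset_Icc_self hκ
  have hK := psiKernel_nonneg (a := a) (hψ' κ hκ') (hψ hκ' (right_mem_Icc.2 hz) hκ.2.le)
  rw [norm_mul, Real.norm_of_nonneg hK]
  exact mul_le_mul_of_nonneg_left (hfg κ hκ') hK

end Basic

section Kernel

variable {ψ ψ' : ℝ → ℝ}

theorem psiKernel_mul_psiKernel_eq {a c τ κ z : ℝ} (hτκ : ψ τ ≤ ψ κ) (hκz : ψ κ ≤ ψ z)
    (hτz : 0 < ψ z - ψ τ) :
    psiKernel a ψ ψ' z κ * psiKernel c ψ ψ' κ τ =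
      psiKernel (a + c) ψ ψ' z τ * (ψ' κ / (ψ z - ψ τ) *
        (((ψ κ - ψ τ) / (ψ z - ψ τ)) ^ (c - 1) * (1 - (ψ κ - ψ τ) / (ψ z - ψ τ)) ^ (a - 1))) := by
  set D := ψ z - ψ τ
  have h1 : 1 - (ψ κ - ψ τ) / D = (ψ z - ψ κ) / D := by
    rw [eq_div_iff hτz.ne', sub_mul, div_mul_cancel₀ _ hτz.ne']; ring
  have hDpow : D ^ (a + c - 1) = D ^ (a - 1) * D ^ (c - 1) * D := by
    rw [← Real.rpow_add hτz, ← Real.rpow_add_one hτz.ne']; ring_nf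
  have hK : psiKernel (a + c) ψ ψ' z τ = ψ' τ * D ^ (a + c - 1) := rfl
  rw [hK, hDpow, h1, Real.div_rpow (sub_nonneg.2 hτκ) hτz.le,
    Real.div_rpow (sub_nonneg.2 hκz) hτz.le]
  simp only [psiKernel]
  field_simp

theorem integrableOn_and_integral_psiKernel_mul_psiKernel {a c s τ z : ℝ} (ha : 0 < a)
    (hc : 0 < c) (hτ : τ ∈ Ico s z) (hψ : StrictMonoOn ψ (Icc s z))
    (hψ' : ∀ x ∈ Icc s z, HasDerivWithinAt ψ (ψ' x) (Icc s z) x) :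
    IntegrableOn (fun κ => psiKernel a ψ ψ' z κ * psiKernel c ψ ψ' κ τ) (Ioo τ z) ∧
      ∫ κ in Ioo τ z, psiKernel a ψ ψ' z κ * psiKernel c ψ ψ' κ τ =
        beta a c * psiKernel (a + c) ψ ψ' z τ := by
  have hτz : τ < z := hτ.2
  have hsub : Icc τ z ⊆ Icc s z := Icc_subset_Icc_left hτ.1
  replace hψ := hψ.mono hsub
  replace hψ' : ∀ x ∈ Icc τ z, HasDerivWithinAt ψ (ψ' x) (Icc τ z) x := fun x hx =>
    (hψ' x (hsub hx)).mono hsub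
  set D := ψ z - ψ τ
  have hD : 0 < D := sub_pos.2 (hψ (left_mem_Icc.2 hτz.le) (right_mem_Icc.2 hτz.le) hτz)
  set φ : ℝ → ℝ := fun κ => (ψ κ - ψ τ) / D
  have hφ : StrictMonoOn φ (Icc τ z) := fun x hx y hy hxy =>
    div_lt_div_of_pos_right (sub_lt_sub_right (hψ hx hy hxy) _) hD
  have hφ' : ∀ x ∈ Icc τ z, HasDerivWithinAt φ (ψ' x / D) (Icc τ z) x := fun x hx =>
    ((hψ' x hx).sub_const _).div_const D
  have hφτ : φ τ = 0 := by simp [φ]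
  have hφz : φ z = 1 := div_self hD.ne'
  set g : ℝ → ℝ := fun x => x ^ (c - 1) * (1 - x) ^ (a - 1)
  have hkernel : EqOn (fun κ => psiKernel a ψ ψ' z κ * psiKernel c ψ ψ' κ τ)
      (fun κ => psiKernel (a + c) ψ ψ' z τ * (ψ' κ / D * g (φ κ))) (Ioo τ z) := fun κ hκ => by
    have hκ' := Ioo_subset_Icc_self hκ
    exact psiKernel_mul_psiKernel_eq (hψ.monotoneOn (left_mem_Icc.2 hτz.le) hκ' hκ.1.le)
      (hψ.monotoneOn hκ' (right_mem_Icc.2 hτz.le) hκ.2.le) hD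
  obtain ⟨hgi, hgv⟩ := integrableOn_and_integral_rpow_mul_one_sub_rpow hc ha
  have hsubst := integral_Ioo_deriv_mul_comp hτz hφ hφ' g
  rw [hφτ, hφz] at hsubst
  refine ⟨?_, ?_⟩
  · have hsubst_int := integrableOn_Ioo_deriv_mul_comp_iff hτz hφ hφ' g
    rw [hφτ, hφz] at hsubst_int
    exact IntegrableOn.congr_fun ((hsubst_int.2 hgi).const_mul _) hkernel.symm measurableSet_Ioo
  · rw [setIntegral_congr_fun measurableSet_Ioo hkernel, integral_const_mul, hsubst, hgv, beta,
      beta, add_comm c, mul_comm (Real.Gamma c), mul_comm]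

theorem integrableOn_psiKernel_mul {a z : ℝ} {f : ℝ → ℝ} (ha : 0 < a) (hz : 0 ≤ z)
    (hψ : StrictMonoOn ψ (Icc 0 z))
    (hψ' : ∀ x ∈ Icc 0 z, HasDerivWithinAt ψ (ψ' x) (Icc 0 z) x)
    (hf : ContinuousOn f (Icc 0 z)) :
    IntegrableOn (fun κ => psiKernel a ψ ψ' z κ * f κ) (Ioo 0 z) := by
  rcases hz.eq_or_lt with rfl | hz
  · simp
  have hψz : ψ 0 < ψ z := hψ (left_mem_Icc.2 hz.le) (right_mem_Icc.2 hz.le) hz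
  have hpow : IntegrableOn (fun u => (ψ z - u) ^ (a - 1)) (Ioo (ψ 0) (ψ z)) := by
    have := ((intervalIntegral.intervalIntegrable_rpow' (a := 0) (b := ψ z - ψ 0)
      (r := a - 1) (by linarith)).comp_sub_left (ψ z)).symm
    rw [sub_zero, sub_sub_cancel] at this
    exact (intervalIntegrable_iff_integrableOn_Ioo_of_le hψz.le).1 this
  have hkernel := (integrableOn_Ioo_deriv_mul_comp_iff hz hψ hψ' _).2 hpow
  obtain ⟨C, hC⟩ := isCompact_Icc.exists_bound_of_continuousOn hf
  refine hkernel.mul_bdd (c := C)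
    ((hf.mono Ioo_subset_Icc_self).aestronglyMeasurable measurableSet_Ioo) ?_
  filter_upwards [ae_restrict_mem measurableSet_Ioo] with κ hκ
  exact hC κ (Ioo_subset_Icc_self hκ)

end Kernel

section Semigroup

variable {ψ ψ' : ℝ → ℝ}

theorem psiKernel_mul_psiInt (a c : ℝ) (f : ℝ → ℝ) {z κ : ℝ} (hκ : 0 ≤ κ) :
    psiKernel a ψ ψ' z κ * psiInt c ψ ψ' f κ =
      (Real.Gamma c)⁻¹ *
        ∫ τ in Ioo 0 κ, psiKernel a ψ ψ' z κ * psiKernel c ψ ψ' κ τ * f τ := by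
  simp only [psiInt_eq_setIntegral c ψ ψ' f hκ, mul_assoc, integral_const_mul]
  ring

theorem continuousOn_openTriangle_psiKernel_mul {a c z : ℝ} {f : ℝ → ℝ}
    (hψ : StrictMonoOn ψ (Icc 0 z)) (hψc : ContinuousOn ψ (Icc 0 z))
    (hψ'c : ContinuousOn ψ' (Icc 0 z)) (hf : ContinuousOn f (Icc 0 z)) :
    ContinuousOn (uncurry fun κ τ => psiKernel a ψ ψ' z κ * psiKernel c ψ ψ' κ τ * f τ)
      (openTriangle 0 z) := by
  have hfst : MapsTo Prod.fst (openTriangle 0 z) (Icc 0 z) := fun p hp =>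
    Ioo_subset_Icc_self hp.2.1
  have hsnd : MapsTo Prod.snd (openTriangle 0 z) (Icc 0 z) := fun p hp =>
    Ioo_subset_Icc_self hp.2.2
  have hψ₁ : ContinuousOn (fun p : ℝ × ℝ => ψ p.1) (openTriangle 0 z) :=
    hψc.comp continuousOn_fst hfst
  have hψ₂ : ContinuousOn (fun p : ℝ × ℝ => ψ p.2) (openTriangle 0 z) :=
    hψc.comp continuousOn_snd hsnd
  have hψ'₁ : ContinuousOn (fun p : ℝ × ℝ => ψ' p.1) (openTriangle 0 z) :=
    hψ'c.comp continuousOn_fst hfst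
  have hψ'₂ : ContinuousOn (fun p : ℝ × ℝ => ψ' p.2) (openTriangle 0 z) :=
    hψ'c.comp continuousOn_snd hsnd
  have hf₂ : ContinuousOn (fun p : ℝ × ℝ => f p.2) (openTriangle 0 z) :=
    hf.comp continuousOn_snd hsnd
  have hpow₁ := (continuousOn_const.sub hψ₁).rpow_const (p := a - 1) fun p hp =>
    Or.inl (sub_ne_zero.2 (hψ (hfst hp) (right_mem_Icc.2 (hp.2.1.1.trans hp.2.1.2).le)
      hp.2.1.2).ne')
  have hpow₂ := (hψ₁.sub hψ₂).rpow_const (p := c - 1) fun p hp =>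
    Or.inl (sub_ne_zero.2 (hψ (hsnd hp) (hfst hp) hp.1).ne')
  exact ((hψ'₁.mul hpow₁).mul (hψ'₂.mul hpow₂)).mul hf₂

theorem integrableOn_openTriangle_psiKernel_mul {a c z : ℝ} {f : ℝ → ℝ} (ha : 0 < a)
    (hc : 0 < c) (hz : 0 < z) (hψ : StrictMonoOn ψ (Icc 0 z))
    (hψ' : ∀ x ∈ Icc 0 z, HasDerivWithinAt ψ (ψ' x) (Icc 0 z) x)
    (hψ'c : ContinuousOn ψ' (Icc 0 z)) (hf : ContinuousOn f (Icc 0 z)) :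
    IntegrableOn (uncurry fun κ τ => psiKernel a ψ ψ' z κ * psiKernel c ψ ψ' κ τ * f τ)
      (openTriangle 0 z) := by
  have hψ'_nonneg : ∀ x ∈ Icc 0 z, 0 ≤ ψ' x := fun x hx =>
    (hψ' x hx).nonneg_of_monotoneOn_Icc hz hx hψ.monotoneOn
  have hcomp := fun τ (hτ : τ ∈ Ioo 0 z) =>
    integrableOn_and_integral_psiKernel_mul_psiKernel ha hc (Ioo_subset_Ico_self hτ) hψ hψ'
  refine integrableOn_openTriangle_of_norm
    ((continuousOn_openTriangle_psiKernel_mul hψ (fun x hx => (hψ' x hx).continuousWithinAt)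
      hψ'c hf).aestronglyMeasurable (measurableSet_openTriangle 0 z))
    (fun τ hτ => (hcomp τ hτ).1.mul_const (f τ)) ?_
  refine IntegrableOn.congr_fun ((integrableOn_psiKernel_mul (add_pos ha hc) hz.le hψ hψ'
    hf.norm).const_mul (beta a c)) (fun τ hτ => ?_) measurableSet_Ioo
  have hτ' := Ioo_subset_Icc_self hτ
  have hnorm_eq : EqOn (fun κ => ‖psiKernel a ψ ψ' z κ * psiKernel c ψ ψ' κ τ * f τ‖)
      (fun κ => psiKernel a ψ ψ' z κ * psiKernel c ψ ψ' κ τ * ‖f τ‖) (Ioo τ z) := fun κ hκ => by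
    have hκ' : κ ∈ Icc 0 z := ⟨hτ.1.le.trans hκ.1.le, hκ.2.le⟩
    have hKa := psiKernel_nonneg (a := a) (hψ'_nonneg κ hκ')
      (hψ.monotoneOn hκ' (right_mem_Icc.2 hz.le) hκ.2.le)
    have hKc := psiKernel_nonneg (a := c) (hψ'_nonneg τ hτ') (hψ.monotoneOn hτ' hκ' hκ.1.le)
    simp only [norm_mul, Real.norm_of_nonneg hKa, Real.norm_of_nonneg hKc]
  rw [setIntegral_congr_fun measurableSet_Ioo hnorm_eq, integral_mul_const, (hcomp τ hτ).2,
    mul_assoc]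

theorem integrableOn_psiKernel_mul_psiInt {a c z : ℝ} {f : ℝ → ℝ} (ha : 0 < a) (hc : 0 < c)
    (hz : 0 ≤ z) (hψ : StrictMonoOn ψ (Icc 0 z))
    (hψ' : ∀ x ∈ Icc 0 z, HasDerivWithinAt ψ (ψ' x) (Icc 0 z) x)
    (hψ'c : ContinuousOn ψ' (Icc 0 z)) (hf : ContinuousOn f (Icc 0 z)) :
    IntegrableOn (fun κ => psiKernel a ψ ψ' z κ * psiInt c ψ ψ' f κ) (Ioo 0 z) := by
  rcases hz.eq_or_lt with rfl | hz
  · simp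
  exact IntegrableOn.congr_fun ((integrableOn_and_integral_Ioo_integral_Ioo_swap
      (integrableOn_openTriangle_psiKernel_mul ha hc hz hψ hψ' hψ'c hf)).1.const_mul _)
    (fun _ hκ => (psiKernel_mul_psiInt a c f hκ.1.le).symm) measurableSet_Ioo

theorem psiInt_psiInt {a c z : ℝ} {f : ℝ → ℝ} (ha : 0 < a) (hc : 0 < c)
    (hz : 0 ≤ z) (hψ : StrictMonoOn ψ (Icc 0 z))
    (hψ' : ∀ x ∈ Icc 0 z, HasDerivWithinAt ψ (ψ' x) (Icc 0 z) x)
    (hψ'c : ContinuousOn ψ' (Icc 0 z)) (hf : ContinuousOn f (Icc 0 z)) :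
    psiInt a ψ ψ' (psiInt c ψ ψ' f) z = psiInt (a + c) ψ ψ' f z := by
  rcases hz.eq_or_lt with rfl | hz
  · simp [psiInt]
  have hinner :
      EqOn (fun τ => ∫ κ in Ioo τ z, psiKernel a ψ ψ' z κ * psiKernel c ψ ψ' κ τ * f τ)
        (fun τ => beta a c * (psiKernel (a + c) ψ ψ' z τ * f τ)) (Ioo 0 z) := fun τ hτ => by
    dsimp only
    rw [integral_mul_const, (integrableOn_and_integral_psiKernel_mul_psiKernel ha hc
      (Ioo_subset_Ico_self hτ) hψ hψ').2, mul_assoc]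
  rw [psiInt_eq_setIntegral _ _ _ _ hz.le, psiInt_eq_setIntegral _ _ _ _ hz.le,
    setIntegral_congr_fun measurableSet_Ioo fun κ hκ => psiKernel_mul_psiInt a c f hκ.1.le,
    integral_const_mul, (integrableOn_and_integral_Ioo_integral_Ioo_swap
      (integrableOn_openTriangle_psiKernel_mul ha hc hz hψ hψ' hψ'c hf)).2,
    setIntegral_congr_fun measurableSet_Ioo hinner, integral_const_mul, beta]
  have := Real.Gamma_pos_of_pos ha
  have := Real.Gamma_pos_of_pos hc
  have := Real.Gamma_pos_of_pos (add_pos ha hc)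
  field_simp

end Semigroup

section Caputo

variable {ψ ψ' : ℝ → ℝ}

theorem psiCaputo_eq_psiInt (α : ℝ) (ψ ψ' v' : ℝ → ℝ) :
    psiCaputo α ψ ψ' v' = psiInt (1 - α) ψ ψ' (fun κ => v' κ / ψ' κ) := by
  ext z
  simp only [psiCaputo, psiInt, sub_sub_cancel_left]

theorem psiInt_one (ψ ψ' f : ℝ → ℝ) (z : ℝ) :
    psiInt 1 ψ ψ' f z = ∫ κ in (0:ℝ)..z, ψ' κ * f κ := by
  simp [psiInt]

theorem integrableOn_psiKernel_mul_psiCaputo {α z : ℝ} {v' : ℝ → ℝ} (hα0 : 0 < α)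
    (hα1 : α < 1) (hz : 0 ≤ z) (hψ : StrictMonoOn ψ (Icc 0 z))
    (hψ' : ∀ x ∈ Icc 0 z, HasDerivWithinAt ψ (ψ' x) (Icc 0 z) x)
    (hψ'c : ContinuousOn ψ' (Icc 0 z)) (hψ'0 : ∀ x ∈ Icc 0 z, ψ' x ≠ 0)
    (hv' : ContinuousOn v' (Icc 0 z)) :
    IntegrableOn (fun κ => psiKernel α ψ ψ' z κ * psiCaputo α ψ ψ' v' κ) (Ioo 0 z) := by
  rw [psiCaputo_eq_psiInt]
  exact integrableOn_psiKernel_mul_psiInt hα0 (sub_pos.2 hα1) hz hψ hψ' hψ'c (hv'.div hψ'c hψ'0)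

theorem psiInt_psiCaputo {α z : ℝ} {v v' : ℝ → ℝ} (hα0 : 0 < α) (hα1 : α < 1)
    (hz : 0 ≤ z) (hψ : StrictMonoOn ψ (Icc 0 z))
    (hψ' : ∀ x ∈ Icc 0 z, HasDerivWithinAt ψ (ψ' x) (Icc 0 z) x)
    (hψ'c : ContinuousOn ψ' (Icc 0 z)) (hψ'0 : ∀ x ∈ Icc 0 z, ψ' x ≠ 0)
    (hv : ∀ x ∈ Icc 0 z, HasDerivWithinAt v (v' x) (Icc 0 z) x)
    (hv' : ContinuousOn v' (Icc 0 z)) :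
    psiInt α ψ ψ' (psiCaputo α ψ ψ' v') z = v z - v 0 := by
  have hcancel : EqOn (fun κ => ψ' κ * (v' κ / ψ' κ)) v' (uIcc 0 z) := fun x hx =>
    mul_div_cancel₀ _ (hψ'0 x (by rwa [uIcc_of_le hz] at hx))
  rw [psiCaputo_eq_psiInt, psiInt_psiInt (f := fun κ => v' κ / ψ' κ) hα0 (sub_pos.2 hα1) hz hψ hψ'
    hψ'c (hv'.div hψ'c hψ'0), add_sub_cancel, psiInt_one, intervalIntegral.integral_congr hcancel]
  refine intervalIntegral.integral_eq_sub_of_hasDeriv_right_of_le hz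
    (fun x hx => (hv x hx).continuousWithinAt) (fun x hx => ?_)
    (hv'.intervalIntegrable_of_Icc hz)
  exact ((hv x (Ioo_subset_Icc_self hx)).hasDerivAt
    (Icc_mem_nhds hx.1 hx.2)).hasDerivWithinAt

end Caputo

theorem caputo_perturbed_integral_estimate_general (α b : ℝ) (hα0 : 0 < α) (hα1 : α < 1)
    (ψ ψ' : ℝ → ℝ)
    (hψ_mono : StrictMonoOn ψ (Set.Icc 0 b))
    (hψ_deriv : ∀ z ∈ Set.Icc 0 b, HasDerivWithinAt ψ (ψ' z) (Set.Icc 0 b) z)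
    (hψ'_cont : ContinuousOn ψ' (Set.Icc 0 b))
    (hψ'_pos : ∀ z ∈ Set.Icc 0 b, 0 < ψ' z)
    (F : ℝ → ℝ → ℝ → ℝ) (H : ℝ → ℝ → ℝ → ℝ)
    (ρ : ℝ → ℝ)
    (hρ_cont : ContinuousOn ρ (Set.Icc 0 b))
    (γ : ℝ)
    (hQ3 : ∀ z ∈ Set.Icc 0 b, psiInt α ψ ψ' ρ z ≤ γ * ρ z)
    (ε : ℝ) (hε : 0 < ε)
    (ω ω' : ℝ → ℝ)
    (hω_deriv : ∀ z ∈ Set.Icc 0 b, HasDerivWithinAt ω (ω' z) (Set.Icc 0 b) z)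
    (hω'_cont : ContinuousOn ω' (Set.Icc 0 b))
    (h : ℝ → ℝ)
    (hh_cont : ContinuousOn h (Set.Icc 0 b))
    (hh_bound : ∀ z ∈ Set.Icc 0 b, |h z| ≤ ε * ρ z)
    (hω_eq : ∀ z ∈ Set.Icc 0 b,
      psiCaputo α ψ ψ' ω' z =
        F z (ω z) (psiInt α ψ ψ' (fun τ => H z τ (psiCaputo α ψ ψ' ω' τ)) z) + h z) :
    ∀ z ∈ Set.Icc 0 b,
      |ω z - ω 0 - psiInt α ψ ψ'
          (fun κ => F κ (ω κ)
            (psiInt α ψ ψ' (fun τ => H κ τ (psiCaputo α ψ ψ' ω' τ)) κ)) z| ≤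
        ε * γ * ρ z := by
  intro z hz
  have hsub : Icc 0 z ⊆ Icc 0 b := Icc_subset_Icc_right hz.2
  have hψ : StrictMonoOn ψ (Icc 0 z) := hψ_mono.mono hsub
  have hψ' : ∀ x ∈ Icc 0 z, HasDerivWithinAt ψ (ψ' x) (Icc 0 z) x := fun x hx =>
    (hψ_deriv x (hsub hx)).mono hsub
  have hω : ∀ x ∈ Icc 0 z, HasDerivWithinAt ω (ω' x) (Icc 0 z) x := fun x hx =>
    (hω_deriv x (hsub hx)).mono hsub
  have hψ'0 : ∀ x ∈ Icc 0 z, ψ' x ≠ 0 := fun x hx => (hψ'_pos x (hsub hx)).ne'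
  have hF : EqOn (fun κ => F κ (ω κ) (psiInt α ψ ψ' (fun τ => H κ τ (psiCaputo α ψ ψ' ω' τ)) κ))
      (fun κ => psiCaputo α ψ ψ' ω' κ - h κ) (Icc 0 z) := fun κ hκ =>
    eq_sub_of_add_eq (hω_eq κ (hsub hκ)).symm
  have hdefect : ω z - ω 0 - psiInt α ψ ψ'
      (fun κ => F κ (ω κ) (psiInt α ψ ψ' (fun τ => H κ τ (psiCaputo α ψ ψ' ω' τ)) κ)) z =
        psiInt α ψ ψ' h z := by
    rw [psiInt_congr hz.1 hF, psiInt_sub hz.1 (integrableOn_psiKernel_mul_psiCaputo hα0 hα1 hz.1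
      hψ hψ' (hψ'_cont.mono hsub) hψ'0 (hω'_cont.mono hsub))
      (integrableOn_psiKernel_mul hα0 hz.1 hψ hψ' (hh_cont.mono hsub)),
      psiInt_psiCaputo hα0 hα1 hz.1 hψ hψ' (hψ'_cont.mono hsub) hψ'0 hω (hω'_cont.mono hsub),
      sub_sub_cancel]
  rw [hdefect]
  calc |psiInt α ψ ψ' h z|
      ≤ psiInt α ψ ψ' (fun κ => ε * ρ κ) z :=
        abs_psiInt_le hα0 hz.1 hψ.monotoneOn (fun x hx => (hψ'_pos x (hsub hx)).le)
          (integrableOn_psiKernel_mul hα0 hz.1 hψ hψ' ((hρ_cont.mono hsub).const_smul ε))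
          fun x hx => hh_bound x (hsub hx)
    _ = ε * psiInt α ψ ψ' ρ z := psiInt_const_mul ε
    _ ≤ ε * (γ * ρ z) := mul_le_mul_of_nonneg_left (hQ3 z hz) hε.le
    _ = ε * γ * ρ z := (mul_assoc _ _ _).symm

/-- Lemma 5.1: if `ω` solves the perturbed equation with perturbation `h` bounded by
`ε ρ(z)`, and `ρ` satisfies condition (Q3) `I^{α,ψ} ρ (z) ≤ γ ρ(z)`, then
`|ω(z) - ω(0) - I^{α,ψ} F(·, ω(·), I^{α,ψ} H(·,τ,N^{α,ψ}ω(τ)))(z)| ≤ ε γ ρ(z)`. -/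
theorem caputo_perturbed_integral_estimate (α b : ℝ) (hα0 : 0 < α) (hα1 : α < 1)
    (hb : 0 < b)
    (ψ ψ' : ℝ → ℝ)
    (hψ_mono : StrictMonoOn ψ (Set.Icc 0 b))
    (hψ_deriv : ∀ z ∈ Set.Icc 0 b, HasDerivWithinAt ψ (ψ' z) (Set.Icc 0 b) z)
    (hψ'_cont : ContinuousOn ψ' (Set.Icc 0 b))
    (hψ'_pos : ∀ z ∈ Set.Icc 0 b, 0 < ψ' z)
    (F : ℝ → ℝ → ℝ → ℝ) (H : ℝ → ℝ → ℝ → ℝ)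
    (hF_cont : ContinuousOn (fun p : ℝ × ℝ × ℝ => F p.1 p.2.1 p.2.2)
      (Set.Icc 0 b ×ˢ (Set.univ : Set ℝ) ×ˢ (Set.univ : Set ℝ)))
    (hH_cont : ContinuousOn (fun p : ℝ × ℝ × ℝ => H p.1 p.2.1 p.2.2)
      (Set.Icc 0 b ×ˢ Set.Icc 0 b ×ˢ (Set.univ : Set ℝ)))
    (ρ : ℝ → ℝ)
    (hρ_cont : ContinuousOn ρ (Set.Icc 0 b))
    (hρ_mono : StrictMonoOn ρ (Set.Icc 0 b))
    (γ : ℝ) (hγ : 0 < γ)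
    (hQ3 : ∀ z ∈ Set.Icc 0 b, psiInt α ψ ψ' ρ z ≤ γ * ρ z)
    (ε : ℝ) (hε : 0 < ε)
    (ω ω' : ℝ → ℝ)
    (hω_deriv : ∀ z ∈ Set.Icc 0 b, HasDerivWithinAt ω (ω' z) (Set.Icc 0 b) z)
    (hω'_cont : ContinuousOn ω' (Set.Icc 0 b))
    (h : ℝ → ℝ)
    (hh_cont : ContinuousOn h (Set.Icc 0 b))
    (hh_bound : ∀ z ∈ Set.Icc 0 b, |h z| ≤ ε * ρ z)
    (hω_eq : ∀ z ∈ Set.Icc 0 b,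
      psiCaputo α ψ ψ' ω' z =
        F z (ω z) (psiInt α ψ ψ' (fun τ => H z τ (psiCaputo α ψ ψ' ω' τ)) z) + h z) :
    ∀ z ∈ Set.Icc 0 b,
      |ω z - ω 0 - psiInt α ψ ψ'
          (fun κ => F κ (ω κ)
            (psiInt α ψ ψ' (fun τ => H κ τ (psiCaputo α ψ ψ' ω' τ)) κ)) z| ≤
        ε * γ * ρ z :=
  caputo_perturbed_integral_estimate_general α b hα0 hα1 ψ ψ' hψ_mono hψ_deriv hψ'_cont hψ'_pos F H
    ρ hρ_cont γ hQ3 ε hε ω ω' hω_deriv hω'_cont h hh_cont hh_bound hω_eq
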